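/- Let X and Y be complete metric spaces, f : X × Y → X and g : X × Y → Y maps, and suppose there exist nonnegative constants k₁ and k₂ with k₁ * k₂ < 1 such that d(f(x,y), f(x',y')) ≤ k₁ * d(y, y') and d(g(x,y), g(x',y')) ≤ k₂ * d(x, x') for all x, x' ∈ X and y, y' ∈ Y. Then the map (x,y) ↦ (f(x,y), g(x,y)) on X × Y has a unique fixed point. -/
import Mathlib


theorem stmt_9 {X Y : Type*} [MetricSpace X] [CompleteSpace X] [Nonempty X]
    [MetricSpace Y] [CompleteSpace Y] [Nonempty Y]
    (f : X × Y → X) (g : X × Y → Y) (k₁ k₂ : ℝ) (hk₁ : 0 ≤ k₁) (hk₂ : 0 ≤ k₂)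
    (hk : k₁ * k₂ < 1)
    (hf : ∀ x x' : X, ∀ y y' : Y, dist (f (x, y)) (f (x', y')) ≤ k₁ * dist y y')
    (hg : ∀ x x' : X, ∀ y y' : Y, dist (g (x, y)) (g (x', y')) ≤ k₂ * dist x x') :
    ∃! p : X × Y, (f p, g p) = p := by
  set T : X × Y → X × Y := fun p => (f p, g p) with hT
  have hK0 : (0:ℝ) ≤ k₁ * k₂ := mul_nonneg hk₁ hk₂
  set K : NNReal := ⟨k₁ * k₂, hK0⟩ with hKdef
  have hfp : ∀ p q : X × Y, dist (f p) (f q) ≤ k₁ * dist p.2 q.2 := by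
    intro p q; simpa using hf p.1 q.1 p.2 q.2
  have hgp : ∀ p q : X × Y, dist (g p) (g q) ≤ k₂ * dist p.1 q.1 := by
    intro p q; simpa using hg p.1 q.1 p.2 q.2
  have hd1 : ∀ p q : X × Y, dist p.1 q.1 ≤ dist p q := fun p q => le_max_left _ _
  have hd2 : ∀ p q : X × Y, dist p.2 q.2 ≤ dist p q := fun p q => le_max_right _ _
  have hcontr : ContractingWith K (T ∘ T) := by
    refine ⟨by exact_mod_cast hk, LipschitzWith.of_dist_le_mul fun p q => ?_⟩
    have h1 : dist (f (T p)) (f (T q)) ≤ k₁ * k₂ * dist p q := by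
      calc dist (f (T p)) (f (T q)) ≤ k₁ * dist (T p).2 (T q).2 := hfp _ _
        _ = k₁ * dist (g p) (g q) := rfl
        _ ≤ k₁ * (k₂ * dist p.1 q.1) := by
            exact mul_le_mul_of_nonneg_left (hgp p q) hk₁
        _ ≤ k₁ * (k₂ * dist p q) := by
            have := hd1 p q
            gcongr
        _ = k₁ * k₂ * dist p q := by ring
    have h2 : dist (g (T p)) (g (T q)) ≤ k₁ * k₂ * dist p q := by
      calc dist (g (T p)) (g (T q)) ≤ k₂ * dist (T p).1 (T q).1 := hgp _ _
        _ = k₂ * dist (f p) (f q) := rfl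
        _ ≤ k₂ * (k₁ * dist p.2 q.2) := by
            exact mul_le_mul_of_nonneg_left (hfp p q) hk₂
        _ ≤ k₂ * (k₁ * dist p q) := by
            have := hd2 p q
            gcongr
        _ = k₁ * k₂ * dist p q := by ring
    calc dist ((T ∘ T) p) ((T ∘ T) q)
        = max (dist (f (T p)) (f (T q))) (dist (g (T p)) (g (T q))) := Prod.dist_eq
      _ ≤ k₁ * k₂ * dist p q := max_le h1 h2
      _ = (K : ℝ) * dist p q := rfl
  set q := hcontr.fixedPoint (T ∘ T) with hqdef
  have hqfix : (T ∘ T) q = q := hcontr.fixedPoint_isFixedPt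
  have huniq : ∀ p : X × Y, (T ∘ T) p = p → p = q := fun p hp =>
    hcontr.fixedPoint_unique hp
  have hTq : T q = q := by
    have : (T ∘ T) (T q) = T q := by
      show T ((T ∘ T) q) = T q
      rw [hqfix]
    exact huniq _ this
  refine ⟨q, hTq, fun p hp => ?_⟩
  have hp' : T p = p := hp
  have : (T ∘ T) p = p := by show T (T p) = p; rw [hp', hp']
  exact huniq p this
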